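/- Let F'/F be a finite Galois extension of number fields. Assume that every nonzero ideal J of O_F such that J·O_{F'} is a principal ideal of O_{F'} is itself principal (injectivity of the natural map Cl_F → Cl_{F'} on class groups). Let a ∈ O_{F'} be a nonzero element such that the principal ideal a·O_{F'} is coprime to the relative different ideal 𝔡_{F'/F} and is Galois-stable: σ(a)·O_{F'} = a·O_{F'} for all σ ∈ Gal(F'/F). Then there exist a unit u ∈ O_{F'}^× and an element a₀ ∈ O_F with a = u·a₀. -/

import Mathlib

/-!
Write `I = (a)`. If `P ⊇ I` is maximal and lies over `p`, the Galois group acts transitively on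
the primes above `p`, so all of them contain the Galois-stable ideal `I`. Since `I` is coprime to
the different, none of these primes divides the different: `p` is unramified, so `p·O_{F'}` is
squarefree and therefore divides `I`. The quotient is again Galois-stable and coprime to the
different, so Noetherian induction gives `I = J·O_{F'}` for an ideal `J` of `O_F`. The class group
hypothesis makes `J = (a₀)` principal, and then `a` and `a₀` are associates in `O_{F'}`.
-/

namespace Ideal

lemma dvd_of_squarefree_of_forall_isPrime_le {S : Type*} [CommRing S] [IsDedekindDomain S]
    {M I : Ideal S} (hM : Squarefree M)
    (h : ∀ Q : Ideal S, Q.IsPrime → M ≤ Q → I ≤ Q) : M ∣ I := by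
  have hrad : I ≤ M.radical := by
    rw [radical_eq_sInf]
    exact le_sInf fun Q ⟨hMQ, hQ⟩ => h Q hQ hMQ
  obtain ⟨n, hn⟩ := exists_pow_le_of_le_radical_of_fg hrad (IsNoetherian.noetherian I)
  exact hM.isRadical n I (dvd_iff_le.mpr hn)

variable (R K L S : Type*) [CommRing R] [CommRing S] [Algebra R S] [Field K] [Field L]
    [Algebra R K] [IsFractionRing R K] [Algebra S L] [Algebra K L] [Algebra R L]
    [IsScalarTower R S L] [IsScalarTower R K L] [IsIntegralClosure S R L] [FiniteDimensional K L]

lemma squarefree_map_of_forall_not_dvd_differentIdeal [IsDedekindDomain R] [IsDedekindDomain S]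
    [IsFractionRing S L] [Module.IsTorsionFree R S] [Module.Finite R S] [Algebra.IsSeparable K L]
    {p : Ideal R} [p.IsMaximal] (hp : p ≠ ⊥)
    (h : ∀ Q : Ideal S, Q.IsPrime → p.map (algebraMap R S) ≤ Q →
      ¬ Q ∣ differentIdeal R S) :
    Squarefree (p.map (algebraMap R S)) := by
  rw [squarefree_iff_irreducible_sq_not_dvd_of_ne_zero
    ((map_eq_bot_iff_of_injective (FaithfulSMul.algebraMap_injective R S)).not.mpr hp)]
  intro Q hQ hQQ
  refine h Q (isPrime_of_prime hQ.prime) (le_of_dvd ((dvd_mul_right Q Q).trans hQQ)) ?_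
  simpa using pow_sub_one_dvd_differentIdeal_aux R K L Q two_ne_zero hp (sq Q ▸ hQQ)

section Galois

variable {R K L S}

lemma map_galRestrict_map_algebraMap (σ : L ≃ₐ[K] L) (p : Ideal R) :
    (p.map (algebraMap R S)).map (galRestrict R K L S σ) = p.map (algebraMap R S) := by
  rw [← map_coe (galRestrict R K L S σ), map_map]
  exact congrArg (map · p) (RingHom.ext (galRestrict R K L S σ).commutes)

variable [IsDedekindDomain R] [IsGalois K L]

lemma le_of_mem_primesOver_of_map_galRestrict_eq {I : Ideal S}
    (hI : ∀ σ : L ≃ₐ[K] L, I.map (galRestrict R K L S σ) = I)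
    {p : Ideal R} {P Q : Ideal S} (hP : P ∈ p.primesOver S) (hQ : Q ∈ p.primesOver S)
    (hIP : I ≤ P) : I ≤ Q := by
  obtain ⟨σ, rfl⟩ := exists_comap_galRestrict_eq R K L S hP hQ
  calc I = I.map (galRestrict R K L S σ⁻¹) := (hI _).symm
    _ = I.comap (galRestrict R K L S σ) := by
      rw [map_inv]
      exact map_symm (galRestrict R K L S σ).toRingEquiv
    _ ≤ P.comap (galRestrict R K L S σ) := comap_mono hIP

end Galois

variable {R K L S} [IsDedekindDomain R] [IsDedekindDomain S] [IsFractionRing S L]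
    [Module.IsTorsionFree R S] [Module.Finite R S] [IsGalois K L]

lemma map_under_dvd_of_map_galRestrict_eq {I : Ideal S} (hI0 : I ≠ ⊥)
    (hcop : I + differentIdeal R S = ⊤)
    (hI : ∀ σ : L ≃ₐ[K] L, I.map (galRestrict R K L S σ) = I)
    (P : Ideal S) [P.IsMaximal] (hIP : I ≤ P) :
    (P.under R).map (algebraMap R S) ∣ I := by
  have hp : P.under R ≠ ⊥ := under_ne_bot R (ne_bot_of_le_ne_bot hI0 hIP)
  have hprimes : ∀ Q : Ideal S, Q.IsPrime → (P.under R).map (algebraMap R S) ≤ Q →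
      I ≤ Q := by
    intro Q hQ hPQ
    have : Q.LiesOver (P.under R) := ⟨IsMaximal.eq_of_le inferInstance
      (comap_ne_top _ hQ.ne_top) (map_le_iff_le_comap.mp hPQ)⟩
    exact le_of_mem_primesOver_of_map_galRestrict_eq hI ⟨inferInstance, inferInstance⟩
      ⟨hQ, this⟩ hIP
  refine dvd_of_squarefree_of_forall_isPrime_le ?_ hprimes
  refine squarefree_map_of_forall_not_dvd_differentIdeal R K L S hp
    fun Q hQ hPQ hQD => hQ.ne_top ?_
  rw [eq_top_iff, ← hcop]
  exact sup_le (hprimes Q hQ hPQ) (le_of_dvd hQD)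

theorem exists_map_algebraMap_eq_of_map_galRestrict_eq (I : Ideal S) (hI0 : I ≠ ⊥)
    (hcop : I + differentIdeal R S = ⊤)
    (hI : ∀ σ : L ≃ₐ[K] L, I.map (galRestrict R K L S σ) = I) :
    ∃ J : Ideal R, J.map (algebraMap R S) = I := by
  induction I using IsNoetherian.induction with | _ I ih =>
  obtain rfl | htop := eq_or_ne I ⊤
  · exact ⟨⊤, map_top _⟩
  obtain ⟨P, hP, hIP⟩ := exists_le_maximal I htop
  obtain ⟨I', hI'⟩ := map_under_dvd_of_map_galRestrict_eq hI0 hcop hI P hIP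
  set M := (P.under R).map (algebraMap R S)
  have hM0 : M ≠ ⊥ := fun h => hI0 (by rw [hI', h, bot_mul])
  have hI'0 : I' ≠ ⊥ := fun h => hI0 (by rw [hI', h, mul_bot])
  have hMtop : M ≠ ⊤ := fun h =>
    hP.ne_top (top_le_iff.mp (h ▸ map_le_iff_le_comap.mpr le_rfl))
  have hII' : I < I' :=
    dvdNotUnit_iff_lt.mp ⟨hI'0, M, mt isUnit_iff.mp hMtop, by rw [hI', mul_comm]⟩
  have hcop' : I' + differentIdeal R S = ⊤ := by
    rw [eq_top_iff, ← hcop]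
    exact sup_le_sup_right hII'.le _
  have hI'σ : ∀ σ : L ≃ₐ[K] L, I'.map (galRestrict R K L S σ) = I' := fun σ =>
    mul_left_cancel₀ hM0 <| calc
      M * I'.map (galRestrict R K L S σ)
          = M.map (galRestrict R K L S σ) * I'.map (galRestrict R K L S σ) := by
        rw [map_galRestrict_map_algebraMap]
      _ = M * I' := by rw [← Ideal.map_mul, ← hI', hI σ]
  obtain ⟨J', hJ'⟩ := ih I' hII' hI'0 hcop' hI'σ
  exact ⟨P.under R * J', by rw [Ideal.map_mul, hJ', hI']⟩

end Ideal

open NumberField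

/-- Let `F'/F` be a finite Galois extension of number fields such that every nonzero ideal of
`O_F` which becomes principal in `O_{F'}` is already principal (injectivity of
`Cl_F → Cl_{F'}`).  If `a ∈ O_{F'}` is nonzero, the ideal `(a)` is coprime to the relative
different and Galois-stable, then `a = u·a₀` for a unit `u` of `O_{F'}` and some `a₀ ∈ O_F`. -/
theorem galois_stable_element_eq_unit_mul_of_classGroup_injective
    (F F' : Type*) [Field F] [NumberField F] [Field F'] [NumberField F']
    [Algebra F F'] [FiniteDimensional F F'] [IsGalois F F']
    (hcl : ∀ J : Ideal (𝓞 F), J ≠ ⊥ →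
      (Ideal.map (algebraMap (𝓞 F) (𝓞 F')) J).IsPrincipal → J.IsPrincipal)
    (a : 𝓞 F') (ha : a ≠ 0)
    (hcop : Ideal.span {a} + differentIdeal (𝓞 F) (𝓞 F') = ⊤)
    (hgal : ∀ σ : F' ≃ₐ[F] F',
      Ideal.span {galRestrict (𝓞 F) F F' (𝓞 F') σ a} = Ideal.span {a}) :
    ∃ (u : (𝓞 F')ˣ) (a₀ : 𝓞 F), a = u * algebraMap (𝓞 F) (𝓞 F') a₀ := by
  have ha' : Ideal.span {a} ≠ ⊥ := by simpa using ha
  obtain ⟨J, hJ⟩ := Ideal.exists_map_algebraMap_eq_of_map_galRestrict_eq (Ideal.span {a})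
    ha' hcop fun σ => by rw [Ideal.map_span, Set.image_singleton, hgal σ]
  have hJ0 : J ≠ ⊥ := by
    rintro rfl
    exact ha' (by rw [← hJ, Ideal.map_bot])
  obtain ⟨a₀, rfl⟩ := hcl J hJ0 ⟨a, hJ⟩
  rw [Ideal.submodule_span_eq, Ideal.map_span, Set.image_singleton,
    Ideal.span_singleton_eq_span_singleton] at hJ
  obtain ⟨u, hu⟩ := hJ
  exact ⟨u, a₀, by rw [← hu, mul_comm]⟩
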